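/- Let M be an infinite metric space with a distinguished base point 0, and suppose the set M′ of accumulation points of M has infinite density character: there is an infinite index set Γ such that every dense subset of M′ has cardinality at least the cardinality of Γ (and some dense subset of M′ has exactly this cardinality). Then (PNA(M) \ SNA(M)) ∪ {0} contains an isometric copy of c₀(Γ): there exists a linear map T : c₀(Γ) → Lip₀(M) such that ‖T a‖ = ‖a‖_∞ for every a ∈ c₀(Γ), and for every nonzero a, the function T a attains its pointwise norm but does not strongly attain its norm. -/

import Mathlib

open Filter Set
open scoped ZeroAtInfty ENNReal NNReal

/-- The optimal Lipschitz constant (Lipschitz norm) of `f : M → ℝ`. -/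
noncomputable def lipNorm {M : Type*} [MetricSpace M] (f : M → ℝ) : ℝ :=
  sSup {r : ℝ | ∃ p q : M, p ≠ q ∧ r = |f p - f q| / dist p q}

/-- `f` belongs to `Lip₀(M)`: it is Lipschitz and vanishes at the base point. -/
def MemLip0 {M : Type*} [MetricSpace M] (base : M) (f : M → ℝ) : Prop :=
  f base = 0 ∧ ∃ K : ℝ≥0, LipschitzWith K f

/-- `f` strongly attains its (Lipschitz) norm. -/
def StronglyAttains {M : Type*} [MetricSpace M] (f : M → ℝ) : Prop :=
  ∃ p q : M, p ≠ q ∧ |f p - f q| = lipNorm f * dist p q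

/-- `f` attains its pointwise norm. -/
def PointwiseAttains {M : Type*} [MetricSpace M] (f : M → ℝ) : Prop :=
  ∃ p : M, sSup {r : ℝ | ∃ q : M, q ≠ p ∧ r = |f p - f q| / dist p q} = lipNorm f

universe u

/-!
A family of points `c γ ∈ M'` (`γ ∈ Γ`) with pairwise disjoint balls `B(c γ, ρ γ)` gives the map
`a ↦ ∑ γ, a γ • φ_γ`, normalised at the base point, where `φ_γ = (ρ γ - d(·, c γ))₊² / (2 ρ γ)`.
Each `φ_γ` is `1`-Lipschitz with slope `1` approached only at its centre, and bumps in different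
balls do not interact. Hence `T a` has Lipschitz norm `‖a‖ = |a γ₀|`: it is approached by slopes at
the accumulation point `c γ₀`, but realised by no pair of points.

Such a family exists because a metric space all of whose dense subsets have at least `κ` points
contains a discrete subset of cardinality `κ`. This goes by induction on `κ`. Maximal separated
nets settle the case where `κ` is not a countable supremum of smaller cardinals. Otherwise `κ` is
the limit of regular cardinals `g k`, and discrete sets of sizes `g k` are glued together: they
are found in annuli around a point all of whose neighbourhoods have density `κ` if there is one,
and otherwise successively, each outside the closure of a set of fewer than `κ` points that
absorbs the isolating balls of the previous ones.
-/

open Metric Cardinal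

theorem mk_iUnion_nat_le {α : Type u} {f : ℕ → Set α} {c : Cardinal.{u}} (h : ∀ n, #(f n) ≤ c) :
    #(⋃ n, f n) ≤ ℵ₀ * c := by
  rw [← (Equiv.ulift (α := ℕ)).surjective.iUnion_comp]
  refine (mk_iUnion_le _).trans (mul_le_mul' (by simp) (ciSup_le' fun n => h n.down))

theorem mk_iUnion_nat_lt_of_isRegular {α : Type u} {f : ℕ → Set α} {ν : Cardinal.{u}}
    (hν : ν.IsRegular) (hν₀ : ℵ₀ < ν) (h : ∀ n, #(f n) < ν) : #(⋃ n, f n) < ν := by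
  rw [← (Equiv.ulift (α := ℕ)).surjective.iUnion_comp]
  exact (card_iUnion_lt_iff_forall_of_isRegular hν (by simpa using hν₀)).2 fun n => h n.down

theorem exists_isRegular_cofinal_seq {κ : Cardinal.{u}} (hκ : ℵ₀ < κ) {f : ℕ → Cardinal.{u}}
    (hf : ∀ n, f n < κ) (hsup : ∀ c, (∀ n, f n ≤ c) → κ ≤ c) :
    ∃ g : ℕ → Cardinal.{u}, (∀ k, ℵ₀ < g k ∧ g k < κ ∧ (g k).IsRegular) ∧
      ∀ c, (∀ k, g k ≤ c) → κ ≤ c := by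
  have hsucc : ∀ c < κ, Order.succ c < κ := fun c hc =>
    (Order.succ_le_of_lt hc).lt_of_ne fun h =>
      hc.not_ge (hsup c fun n => Order.lt_succ_iff.1 (h ▸ hf n))
  exact ⟨fun k => Order.succ (max ℵ₀ (f k)),
    fun k => ⟨Order.lt_succ_iff.2 (le_max_left _ _), hsucc _ (max_lt hκ (hf k)),
      isRegular_succ (le_max_left _ _)⟩,
    fun c hc => hsup c fun n => (le_max_right _ _).trans ((Order.le_succ _).trans (hc n))⟩

namespace ZeroAtInftyContinuousMap

variable {Γ : Type*} [TopologicalSpace Γ]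

theorem abs_apply_le_norm (a : C₀(Γ, ℝ)) (γ : Γ) : |a γ| ≤ ‖a‖ := by
  simpa [norm_toBCF_eq_norm] using a.toBCF.norm_coe_le_norm γ

/-- A nonzero function vanishing at infinity attains its sup norm, since away from a compact set
it stays below any of its nonzero values. -/
theorem exists_abs_apply_eq_norm {a : C₀(Γ, ℝ)} (ha : a ≠ 0) : ∃ γ, |a γ| = ‖a‖ := by
  obtain ⟨γ₀, hγ₀⟩ : ∃ γ, a γ ≠ 0 := by
    by_contra! h
    exact ha (ext h)
  have hev : ∀ᶠ γ in Filter.cocompact Γ, |a γ| ≤ |a γ₀| :=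
    (Metric.tendsto_nhds.1 a.zero_at_infty' _ (abs_pos.2 hγ₀)).mono fun γ hγ => by
      rw [Real.dist_0_eq_abs] at hγ
      exact hγ.le
  obtain ⟨γ, hγ⟩ := (continuous_abs.comp a.continuous).exists_forall_ge' γ₀ hev
  refine ⟨γ, le_antisymm (abs_apply_le_norm a γ) ?_⟩
  rw [← norm_toBCF_eq_norm]
  exact (BoundedContinuousFunction.norm_le (abs_nonneg _)).2 hγ

end ZeroAtInftyContinuousMap

section Bumps

/-- `1`-Lipschitz in `d ≥ 0`, with slope `-1` reached only in the limit `d → 0`: this is why the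
norms of the functions built from it are attained pointwise at the centres but never strongly. -/
noncomputable def hump (r d : ℝ) : ℝ := max (r - d) 0 ^ 2 / (2 * r)

variable {r : ℝ}

theorem hump_nonneg (hr : 0 < r) (d : ℝ) : 0 ≤ hump r d :=
  div_nonneg (sq_nonneg _) (by linarith)

theorem hump_eq_zero {d : ℝ} (hd : r ≤ d) : hump r d = 0 := by
  simp [hump, max_eq_right (sub_nonpos.2 hd)]

theorem hump_le_half (hr : 0 < r) {d : ℝ} (hd : 0 ≤ d) (hdr : d ≤ r) : hump r d ≤ (r - d) / 2 := by
  unfold hump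
  rw [max_eq_left (sub_nonneg.2 hdr), div_le_div_iff₀ (by linarith) two_pos]
  nlinarith

theorem hump_zero_sub (hr : 0 < r) {d : ℝ} (hdr : d ≤ r) :
    hump r 0 - hump r d = d * (2 * r - d) / (2 * r) := by
  unfold hump
  rw [sub_zero, max_eq_left hr.le, max_eq_left (sub_nonneg.2 hdr)]
  field_simp
  ring

theorem abs_hump_sub_lt (hr : 0 < r) {u v : ℝ} (hu : 0 ≤ u) (hv : 0 ≤ v)
    (h : hump r u ≠ hump r v) : |hump r u - hump r v| < |u - v| := by
  set p := max (r - u) 0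
  set q := max (r - v) 0
  have hp : 0 ≤ p ∧ p ≤ r := ⟨le_max_right _ _, max_le (by linarith) hr.le⟩
  have hq : 0 ≤ q ∧ q ≤ r := ⟨le_max_right _ _, max_le (by linarith) hr.le⟩
  have hpq : p ≠ q := fun hpq => h (by simp only [hump, p, q] at hpq ⊢; rw [hpq])
  have hsum : 0 < p + q ∧ p + q < 2 * r := by
    constructor <;> by_contra! hc <;> exact hpq (by linarith)
  have key : hump r u - hump r v = (p - q) * ((p + q) / (2 * r)) := by
    simp only [hump, p, q]
    field_simp
    ring
  rw [key, abs_mul, abs_of_pos (div_pos hsum.1 (by linarith))]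
  calc |p - q| * ((p + q) / (2 * r)) < |p - q| * 1 :=
        mul_lt_mul_of_pos_left ((div_lt_one (by linarith)).2 hsum.2)
          (abs_pos.2 (sub_ne_zero.2 hpq))
    _ ≤ |u - v| := by
        rw [mul_one, abs_sub_comm u v]
        simpa using abs_max_sub_max_le_abs (r - u) (r - v) 0

end Bumps

section

variable {M : Type u} [MetricSpace M]

section DensityCharacter

def IsDenseSubset (D Z : Set M) : Prop := D ⊆ Z ∧ Z ⊆ closure D

noncomputable def densityChar (Z : Set M) : Cardinal.{u} :=
  sInf {c | ∃ D, IsDenseSubset D Z ∧ #D = c}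

theorem isDenseSubset_self (Z : Set M) : IsDenseSubset Z Z := ⟨subset_rfl, subset_closure⟩

theorem densityChar_le {D Z : Set M} (h : IsDenseSubset D Z) : densityChar Z ≤ #D :=
  csInf_le' ⟨D, h, rfl⟩

theorem exists_isDenseSubset_mk_eq (Z : Set M) :
    ∃ D, IsDenseSubset D Z ∧ #D = densityChar Z :=
  csInf_mem (s := {c | ∃ D, IsDenseSubset D Z ∧ #D = c}) ⟨#Z, Z, isDenseSubset_self Z, rfl⟩

theorem le_densityChar {Z : Set M} {κ : Cardinal} (h : ∀ D, IsDenseSubset D Z → κ ≤ #D) :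
    κ ≤ densityChar Z :=
  le_csInf ⟨#Z, Z, isDenseSubset_self Z, rfl⟩ (by rintro c ⟨D, hD, rfl⟩; exact h D hD)

theorem densityChar_le_mk (Z : Set M) : densityChar Z ≤ #Z :=
  densityChar_le (isDenseSubset_self Z)

/-- Near each point of a dense subset of `Z`, pick a point of `Z'` at distance `< 1 / (n + 1)`
for every `n` for which there is one. -/
theorem densityChar_le_of_subset {Z' Z : Set M} (hsub : Z' ⊆ Z) :
    densityChar Z' ≤ max ℵ₀ (densityChar Z) := by
  rcases Z'.eq_empty_or_nonempty with rfl | ⟨z₀, hz₀⟩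
  · exact (densityChar_le_mk _).trans (by simp)
  obtain ⟨D, hD, hDc⟩ := exists_isDenseSubset_mk_eq Z
  have hpick : ∀ (n : ℕ) (d : M), ∃ y ∈ Z', (Z' ∩ ball d (1 / (n + 1))).Nonempty →
      dist y d < 1 / (n + 1) :=
    fun n d => (Z' ∩ ball d (1 / (n + 1))).eq_empty_or_nonempty.elim
      (fun h => ⟨z₀, hz₀, fun h' => absurd h h'.ne_empty⟩)
      (fun ⟨y, hy⟩ => ⟨y, hy.1, fun _ => hy.2⟩)
  choose g hgZ hg using hpick
  have hdense : IsDenseSubset (⋃ n, g n '' D) Z' := by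
    refine ⟨iUnion_subset fun n => image_subset_iff.2 fun d _ => hgZ n d, fun z hz => ?_⟩
    refine Metric.mem_closure_iff.2 fun ε hε => ?_
    obtain ⟨n, hn⟩ := exists_nat_one_div_lt (half_pos hε)
    obtain ⟨d, hd, hzd⟩ :=
      Metric.mem_closure_iff.1 (hD.2 (hsub hz)) _ (Nat.one_div_pos_of_nat (n := n))
    have hgd := hg n d ⟨z, hz, mem_ball.2 hzd⟩
    refine ⟨g n d, mem_iUnion.2 ⟨n, mem_image_of_mem _ hd⟩, ?_⟩
    calc dist z (g n d) ≤ dist z d + dist (g n d) d := dist_triangle_right _ _ _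
      _ < ε / 2 + ε / 2 := add_lt_add (hzd.trans hn) (hgd.trans hn)
      _ = ε := add_halves ε
  calc densityChar Z' ≤ #(⋃ n, g n '' D) := densityChar_le hdense
    _ ≤ ℵ₀ * densityChar Z := mk_iUnion_nat_le fun n => hDc ▸ mk_image_le
    _ ≤ max ℵ₀ (densityChar Z) := (mul_le_max _ _).trans (by simp)

theorem densityChar_le_diff_closure_add {Z W : Set M} (hW : W ⊆ Z) :
    densityChar Z ≤ densityChar (Z \ closure W) + #W := by
  obtain ⟨D, hD, hDc⟩ := exists_isDenseSubset_mk_eq (Z \ closure W)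
  have hdense : IsDenseSubset (D ∪ W) Z := by
    refine ⟨union_subset (hD.1.trans sdiff_subset) hW, fun z hz => ?_⟩
    by_cases h : z ∈ closure W
    · exact closure_mono subset_union_right h
    · exact closure_mono subset_union_left (hD.2 ⟨hz, h⟩)
  exact (densityChar_le hdense).trans (hDc ▸ mk_union_le D W)

end DensityCharacter

section DiscreteSubsets

def IsIsolatingRadius (S : Set M) (b : M → ℝ) : Prop :=
  ∀ s ∈ S, 0 < b s ∧ ∀ t ∈ S, t ≠ s → b s ≤ dist s t

def HasDiscreteSubsetOfCard (Z : Set M) (κ : Cardinal.{u}) : Prop :=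
  ∃ S ⊆ Z, IsDiscrete S ∧ κ ≤ #S

theorem isDiscrete_of_forall_exists_pos {S : Set M}
    (h : ∀ s ∈ S, ∃ r > 0, ∀ t ∈ S, t ≠ s → r ≤ dist s t) : IsDiscrete S := by
  refine isDiscrete_iff_forall_mem_exists_isOpen.2 fun s hs => ?_
  obtain ⟨r, hr, hsep⟩ := h s hs
  refine ⟨ball s r, isOpen_ball, subset_antisymm ?_ ?_⟩
  · rintro t ⟨htb, htS⟩
    by_contra hts
    exact (hsep t htS hts).not_gt (by rwa [mem_ball, dist_comm] at htb)
  · rintro _ rfl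
    exact ⟨mem_ball_self hr, hs⟩

theorem IsIsolatingRadius.isDiscrete {S : Set M} {b : M → ℝ} (h : IsIsolatingRadius S b) :
    IsDiscrete S :=
  isDiscrete_of_forall_exists_pos fun s hs => ⟨b s, h s hs⟩

theorem IsDiscrete.exists_isIsolatingRadius {S : Set M} (h : IsDiscrete S) :
    ∃ b, IsIsolatingRadius S b := by
  have : ∀ s ∈ S, ∃ r > 0, ∀ t ∈ S, t ≠ s → r ≤ dist s t := by
    intro s hs
    obtain ⟨r, hr, hball⟩ := exists_ball_inter_eq_singleton_of_mem_discrete h hs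
    refine ⟨r, hr, fun t ht hts => not_lt.1 fun hlt => hts ?_⟩
    have : t ∈ ball s r ∩ S := ⟨by rwa [mem_ball, dist_comm], ht⟩
    rwa [hball] at this
  choose! b hb using this
  exact ⟨b, hb⟩

theorem IsIsolatingRadius.mono {S : Set M} {b b' : M → ℝ} (h : IsIsolatingRadius S b)
    (hpos : ∀ s ∈ S, 0 < b' s) (hle : ∀ s ∈ S, b' s ≤ b s) : IsIsolatingRadius S b' :=
  fun s hs => ⟨hpos s hs, fun t ht hts => (hle s hs).trans ((h s hs).2 t ht hts)⟩

theorem isIsolatingRadius_const {A : Set M} {ε : ℝ} (hε : 0 < ε)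
    (hA : A.Pairwise fun a b => ε ≤ dist a b) : IsIsolatingRadius A fun _ => ε :=
  fun _ hs => ⟨hε, fun _ ht hts => hA hs ht hts.symm⟩

theorem isDiscrete_iUnion_of_isIsolatingRadius {R : ℕ → Set M} {b : ℕ → M → ℝ}
    (hR : ∀ k, IsIsolatingRadius (R k) (b k))
    (hcross : ∀ i j, i < j → ∀ s ∈ R i, ∀ t ∈ R j, b i s ≤ dist s t ∧ b j t ≤ dist s t) :
    IsDiscrete (⋃ k, R k) := by
  refine isDiscrete_of_forall_exists_pos fun s hs => ?_
  obtain ⟨i, hi⟩ := mem_iUnion.1 hs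
  refine ⟨b i s, (hR i s hi).1, fun t ht hts => ?_⟩
  obtain ⟨j, hj⟩ := mem_iUnion.1 ht
  rcases lt_trichotomy i j with h | rfl | h
  · exact (hcross i j h s hi t hj).1
  · exact (hR i s hi).2 t hj hts
  · rw [dist_comm]
    exact (hcross j i h t hj s hi).2

theorem exists_maximal_separated (Z : Set M) {ε : ℝ} (hε : 0 < ε) :
    ∃ A ⊆ Z, A.Pairwise (fun a b => ε ≤ dist a b) ∧ ∀ z ∈ Z, ∃ a ∈ A, dist z a < ε := by
  obtain ⟨A, ⟨hAZ, hA⟩, hmax⟩ :=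
    zorn_subset {A : Set M | A ⊆ Z ∧ A.Pairwise fun a b => ε ≤ dist a b}
      fun c hc hchain => ⟨⋃₀ c, ⟨sUnion_subset fun s hs => (hc hs).1,
        hchain.pairwise_sUnion.2 fun s hs => (hc hs).2⟩, fun s hs => subset_sUnion_of_mem hs⟩
  refine ⟨A, hAZ, hA, fun z hz => ?_⟩
  by_contra! hfar
  have hzA : z ∈ A := hmax ⟨insert_subset hz hAZ, hA.insert fun a ha _ =>
    ⟨hfar a ha, dist_comm z a ▸ hfar a ha⟩⟩ (subset_insert z A) (mem_insert z A)
  simpa [hε.not_ge] using hfar z hzA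

/-- Points approaching an accumulation point of `Z`, each less than half as close as the previous
one, form a discrete set; without accumulation points `Z` itself is discrete. -/
theorem exists_infinite_isDiscrete_subset {Z : Set M} (hZ : Z.Infinite) :
    ∃ S ⊆ Z, IsDiscrete S ∧ S.Infinite := by
  by_cases hacc : ∃ p, AccPt p (𝓟 Z)
  swap
  · push Not at hacc
    exact ⟨Z, subset_rfl, ⟨discreteTopology_of_noAccPts fun x _ => hacc x⟩, hZ⟩
  obtain ⟨p, hp⟩ := hacc
  have hpick : ∀ ε : ℝ, ∃ z, 0 < ε → z ∈ Z ∧ z ≠ p ∧ dist z p < ε := fun ε => by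
    by_cases hε : 0 < ε
    · obtain ⟨z, ⟨hzb, hzZ⟩, hzp⟩ := accPt_iff_nhds.1 hp _ (ball_mem_nhds p hε)
      exact ⟨z, fun _ => ⟨hzZ, hzp, hzb⟩⟩
    · exact ⟨p, fun h => absurd h hε⟩
  choose pick hpick using hpick
  let ε : ℕ → ℝ := fun n => Nat.rec 1 (fun _ e => dist (pick e) p / 2) n
  have hε : ∀ n, 0 < ε n := by
    intro n
    induction n with
    | zero => exact one_pos
    | succ n ih => exact half_pos (dist_pos.2 (hpick _ ih).2.1)
  set x : ℕ → M := fun n => pick (ε n)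
  set d : ℕ → ℝ := fun n => dist (x n) p
  have hd_pos : ∀ n, 0 < d n := fun n => dist_pos.2 (hpick _ (hε n)).2.1
  have hd_succ : ∀ n, d (n + 1) < d n / 2 := fun n => (hpick _ (hε (n + 1))).2.2
  have hd_anti : StrictAnti d :=
    strictAnti_nat_of_succ_lt fun n => (hd_succ n).trans (half_lt_self (hd_pos n))
  have hd_lt : ∀ i j, i < j → d j < d i / 2 := fun i j hij =>
    (hd_anti.antitone hij).trans_lt (hd_succ i)
  refine ⟨range x, range_subset_iff.2 fun n => (hpick _ (hε n)).1, ?_,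
    infinite_range_of_injective fun i j hij => hd_anti.injective (by simp only [d, hij])⟩
  rw [← iUnion_singleton_eq_range]
  refine isDiscrete_iUnion_of_isIsolatingRadius (b := fun n _ => d n / 2)
    (fun n => by simp [IsIsolatingRadius, hd_pos n]) fun i j hij s hs t ht => ?_
  rw [mem_singleton_iff] at hs ht
  subst hs ht
  have htri : d i ≤ dist (x i) (x j) + d j := dist_triangle _ _ _
  have := hd_lt i j hij
  constructor <;> linarith [hd_pos j]

theorem hasDiscreteSubsetOfCard_of_le_aleph0 {Z : Set M} {κ : Cardinal.{u}} (hκ : κ ≤ ℵ₀)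
    (hZ : κ ≤ densityChar Z) : HasDiscreteSubsetOfCard Z κ := by
  rcases Z.finite_or_infinite with hfin | hinf
  · exact ⟨Z, subset_rfl, hfin.isDiscrete, hZ.trans (densityChar_le_mk Z)⟩
  · obtain ⟨S, hSZ, hS, hSinf⟩ := exists_infinite_isDiscrete_subset hinf
    exact ⟨S, hSZ, hS, hκ.trans (aleph0_le_mk_iff.2 hSinf.to_subtype)⟩

end DiscreteSubsets

section Construction

variable {Z : Set M} {κ : Cardinal.{u}}

theorem exists_annulus_le_densityChar {x : M} (hx : x ∈ Z) {ρ : ℝ} (hρ : 0 < ρ)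
    (hball : κ ≤ densityChar (Z ∩ ball x ρ)) {ν : Cardinal.{u}} (hν₀ : ℵ₀ ≤ ν) (hν : ν < κ) :
    ∃ a, 0 < a ∧ a ≤ ρ ∧ ν ≤ densityChar ((Z ∩ ball x ρ) \ closedBall x a) := by
  by_contra! hsmall
  have hA : ∀ n : ℕ, densityChar ((Z ∩ ball x ρ) \ closedBall x (ρ / (n + 1))) < ν :=
    fun n => hsmall _ (by positivity) (div_le_self hρ.le (by simp))
  choose D hD hDc using fun n : ℕ => exists_isDenseSubset_mk_eq
    ((Z ∩ ball x ρ) \ closedBall x (ρ / (n + 1)))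
  have hdense : IsDenseSubset (insert x (⋃ n, D n)) (Z ∩ ball x ρ) := by
    refine ⟨insert_subset ⟨hx, mem_ball_self hρ⟩
      (iUnion_subset fun n => (hD n).1.trans sdiff_subset), fun y hy => ?_⟩
    rcases eq_or_ne y x with rfl | hyx
    · exact subset_closure (mem_insert _ _)
    obtain ⟨n, hn⟩ := exists_nat_one_div_lt (div_pos (dist_pos.2 hyx) hρ)
    rw [lt_div_iff₀ hρ, one_div_mul_eq_div] at hn
    refine closure_mono ((subset_iUnion D n).trans (subset_insert _ _)) ((hD n).2 ⟨hy, ?_⟩)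
    rwa [mem_closedBall, not_le]
  have hcard : #(insert x (⋃ n, D n) : Set M) ≤ ν :=
    calc #(insert x (⋃ n, D n) : Set M) ≤ #(⋃ n, D n) + 1 := mk_insert_le
      _ ≤ ℵ₀ * ν + 1 := add_le_add_left (mk_iUnion_nat_le fun n => (hDc n).trans_le (hA n).le) 1
      _ = ν := by rw [aleph0_mul_eq hν₀, add_one_of_aleph0_le hν₀]
  exact hν.not_ge (hball.trans ((densityChar_le hdense).trans hcard))

/-- Discrete sets of sizes `g k`, found in annuli shrinking towards `x`, combine into one discrete
set. -/
theorem hasDiscreteSubsetOfCard_of_heavy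
    (IH : ∀ ν < κ, ∀ V : Set M, ν ≤ densityChar V → HasDiscreteSubsetOfCard V ν)
    {g : ℕ → Cardinal.{u}} (hg : ∀ k, ℵ₀ ≤ g k ∧ g k < κ)
    (hcof : ∀ c, (∀ k, g k ≤ c) → κ ≤ c)
    {x : M} (hx : x ∈ Z) (hheavy : ∀ ρ > 0, κ ≤ densityChar (Z ∩ ball x ρ)) :
    HasDiscreteSubsetOfCard Z κ := by
  have hann : ∀ (k : ℕ) (ρ : ℝ), ∃ a, 0 < ρ →
      0 < a ∧ a ≤ ρ ∧ g k ≤ densityChar ((Z ∩ ball x ρ) \ closedBall x a) := fun k ρ => by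
    by_cases hρ : 0 < ρ
    · obtain ⟨a, ha⟩ := exists_annulus_le_densityChar hx hρ (hheavy ρ hρ) (hg k).1 (hg k).2
      exact ⟨a, fun _ => ha⟩
    · exact ⟨0, fun h => absurd h hρ⟩
  choose a ha using hann
  let ρ : ℕ → ℝ := fun k => Nat.rec 1 (fun k r => a k r / 2) k
  have hρ_pos : ∀ k, 0 < ρ k := by
    intro k
    induction k with
    | zero => exact one_pos
    | succ k ih => exact half_pos (ha k _ ih).1
  set A : ℕ → ℝ := fun k => a k (ρ k)
  have hA : ∀ k, 0 < A k ∧ A k ≤ ρ k ∧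
      g k ≤ densityChar ((Z ∩ ball x (ρ k)) \ closedBall x (A k)) :=
    fun k => ha k _ (hρ_pos k)
  have hρ_anti : Antitone ρ := antitone_nat_of_succ_le fun k =>
    (half_le_self (hA k).1.le).trans (hA k).2.1
  have hρA : ∀ i j, i < j → ρ j ≤ A i / 2 := fun i j hij => hρ_anti hij
  choose S hS using fun k => IH (g k) (hg k).2 _ (hA k).2.2
  choose r hr using fun k => (hS k).2.1.exists_isIsolatingRadius
  refine ⟨⋃ k, S k, iUnion_subset fun k => (hS k).1.trans (sdiff_subset.trans inter_subset_left),
    isDiscrete_iUnion_of_isIsolatingRadius (b := fun k s => min (r k s) (A k / 2))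
      (fun k => (hr k).mono (fun s hs => lt_min ((hr k) s hs).1 (half_pos (hA k).1))
        fun s _ => min_le_left _ _) ?_,
    hcof _ fun k => (hS k).2.2.trans (mk_le_mk_of_subset (subset_iUnion S k))⟩
  intro i j hij s hs t ht
  have hsx : A i < dist s x := not_le.1 ((hS i).1 hs).2
  have htx : dist t x < ρ j := ((hS j).1 ht).1.2
  have hst : dist s x ≤ dist s t + dist t x := dist_triangle _ _ _
  have := hρA i j hij
  have := (hA j).2.1
  have := (hA j).1
  constructor
  · exact (min_le_right _ _).trans (by linarith)
  · exact (min_le_right _ _).trans (by linarith)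

/-- A stage of the construction away from heavy points: removing `closure W` from `Z` lowers the
density by less than `κ`, and keeps all later points out of the isolating balls. -/
def HasAbsorbedDiscreteSubset (Z Z' : Set M) (κ ν : Cardinal.{u}) : Prop :=
  ∃ R ⊆ Z', ∃ b, IsIsolatingRadius R b ∧ ν ≤ #R ∧
    ∃ W ⊆ Z, #W < κ ∧ ∀ s ∈ R, Z ∩ closedBall s (b s) ⊆ closure W

theorem HasAbsorbedDiscreteSubset.exists_le_dist {ν : Cardinal.{u}} {F : Set M}
    (h : HasAbsorbedDiscreteSubset Z (Z \ F) κ ν) (hF : IsClosed F) :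
    ∃ R ⊆ Z \ F, ∃ b, IsIsolatingRadius R b ∧ ν ≤ #R ∧ (∀ s ∈ R, ∀ w ∈ F, b s ≤ dist s w) ∧
      ∃ W ⊆ Z, #W < κ ∧ ∀ s ∈ R, Z ∩ closedBall s (b s) ⊆ closure W := by
  obtain ⟨R, hRsub, b, hb, hνR, W, hWZ, hWκ, hW⟩ := h
  have hδ : ∀ s ∈ R, ∃ δ > 0, ∀ w ∈ F, δ ≤ dist s w := fun s hs => by
    obtain ⟨δ, hδ, hball⟩ := Metric.isOpen_iff.1 hF.isOpen_compl s (hRsub hs).2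
    exact ⟨δ, hδ, fun w hw => not_lt.1 fun hlt => hball (mem_ball'.2 hlt) hw⟩
  choose! δ hδ using hδ
  exact ⟨R, hRsub, fun s => min (b s) (δ s),
    hb.mono (fun s hs => lt_min (hb s hs).1 (hδ s hs).1) fun s _ => min_le_left _ _, hνR,
    fun s hs w hw => (min_le_right _ _).trans ((hδ s hs).2 w hw), W, hWZ, hWκ,
    fun s hs => (inter_subset_inter_right _
      (closedBall_subset_closedBall (min_le_left _ _))).trans (hW s hs)⟩

theorem hasAbsorbedDiscreteSubset_of_separated {Z' T : Set M} (hTZ' : T ⊆ Z') {r : ℝ} (hr : 0 < r)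
    (hT : T.Pairwise fun a b => r / 2 ≤ dist a b) (hTκ : #T < κ) (hκ : ℵ₀ < κ)
    (hball : ∀ t ∈ T, densityChar (Z ∩ ball t r) < κ)
    {g : ℕ → Cardinal.{u}} (hg : ∀ k, g k < κ) (hcof : ∀ c < κ, ∃ k, c ≤ g k)
    {ν : Cardinal.{u}} (hν : ν.IsRegular) (hν₀ : ℵ₀ < ν) (hνT : ν ≤ #T) :
    HasAbsorbedDiscreteSubset Z Z' κ ν := by
  set P : ℕ → Set M := fun k => {t ∈ T | densityChar (Z ∩ ball t r) ≤ g k}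
  have hTP : T = ⋃ k, P k := by
    ext t
    refine ⟨fun ht => ?_, fun ht => (mem_iUnion.1 ht).choose_spec.1⟩
    obtain ⟨k, hk⟩ := hcof _ (hball t ht)
    exact mem_iUnion.2 ⟨k, ht, hk⟩
  obtain ⟨k, hk⟩ : ∃ k, ν ≤ #(P k) := by
    by_contra! h
    exact hνT.not_gt (hTP ▸ mk_iUnion_nat_lt_of_isRegular hν hν₀ h)
  choose D hD hDc using fun t => exists_isDenseSubset_mk_eq (Z ∩ ball t r)
  have hPT : #(P k) < κ := (mk_le_mk_of_subset fun t ht => ht.1).trans_lt hTκ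
  refine ⟨P k, fun t ht => hTZ' ht.1, fun _ => r / 4,
    isIsolatingRadius_const (by positivity) fun s hs t ht hst =>
      (by linarith : r / 4 ≤ r / 2).trans (hT hs.1 ht.1 hst),
    hk, ⋃ t : P k, D t, iUnion_subset fun t => (hD t).1.trans inter_subset_left, ?_, ?_⟩
  · refine (mk_iUnion_le _).trans_lt (mul_lt_of_lt hκ.le hPT ?_)
    exact (ciSup_le' fun t : P k => (hDc t.1).trans_le t.2.2).trans_lt (hg k)
  · rintro s hs y ⟨hyZ, hys⟩
    refine closure_mono (subset_iUnion (fun t : P k => D t) ⟨s, hs⟩) ((hD s).2 ⟨hyZ, ?_⟩)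
    rw [mem_closedBall] at hys
    rw [mem_ball]
    linarith

theorem hasAbsorbedDiscreteSubset_of_ball {Z' : Set M} {t : M} {r : ℝ}
    (hball : densityChar (Z ∩ ball t r) < κ)
    (IH : ∀ ν < κ, ∀ V : Set M, ν ≤ densityChar V → HasDiscreteSubsetOfCard V ν)
    {ν : Cardinal.{u}} (hνκ : ν < κ) (hν : ν ≤ densityChar (Z' ∩ ball t r)) :
    HasAbsorbedDiscreteSubset Z Z' κ ν := by
  obtain ⟨R, hRsub, hR, hνR⟩ := IH ν hνκ _ hν
  obtain ⟨b, hb⟩ := hR.exists_isIsolatingRadius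
  obtain ⟨D, hD, hDc⟩ := exists_isDenseSubset_mk_eq (Z ∩ ball t r)
  have hst : ∀ s ∈ R, dist s t < r := fun s hs => (hRsub hs).2
  refine ⟨R, fun s hs => (hRsub hs).1, fun s => min (b s) ((r - dist s t) / 2),
    hb.mono (fun s hs => lt_min (hb s hs).1 (by linarith [hst s hs])) fun s _ => min_le_left _ _,
    hνR, D, hD.1.trans inter_subset_left, hDc ▸ hball, ?_⟩
  rintro s hs y ⟨hyZ, hys⟩
  refine hD.2 ⟨hyZ, ?_⟩
  rw [mem_closedBall] at hys
  have := hys.trans (min_le_right _ _)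
  have := hst s hs
  rw [mem_ball]
  linarith [dist_triangle y s t]

theorem hasAbsorbedDiscreteSubset_of_light (hκ : ℵ₀ < κ)
    (hsep : ∀ S ⊆ Z, ∀ ε > 0, S.Pairwise (fun a b => ε ≤ dist a b) → #S < κ)
    (IH : ∀ ν < κ, ∀ V : Set M, ν ≤ densityChar V → HasDiscreteSubsetOfCard V ν)
    (hlight : ∀ x ∈ Z, ∃ n : ℕ, densityChar (Z ∩ ball x (1 / (n + 1))) < κ)
    {g : ℕ → Cardinal.{u}} (hg : ∀ k, g k < κ) (hcof : ∀ c < κ, ∃ k, c ≤ g k)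
    {Z' : Set M} (hZ'Z : Z' ⊆ Z) (hZ' : κ ≤ densityChar Z')
    {ν : Cardinal.{u}} (hν : ν.IsRegular) (hν₀ : ℵ₀ < ν) (hνκ : ν < κ) :
    HasAbsorbedDiscreteSubset Z Z' κ ν := by
  set r : ℕ → ℝ := fun n => 1 / (n + 1)
  have hr : ∀ n, 0 < r n := fun n => Nat.one_div_pos_of_nat
  set Y : ℕ → Set M := fun n => {x ∈ Z' | densityChar (Z ∩ ball x (r n)) < κ}
  choose T hTY hTsep hTcov using fun n => exists_maximal_separated (Y n) (half_pos (hr n))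
  by_cases hbig : ∃ n, ν ≤ #(T n)
  · obtain ⟨n, hn⟩ := hbig
    exact hasAbsorbedDiscreteSubset_of_separated (fun t ht => (hTY n ht).1) (hr n) (hTsep n)
      (hsep _ (fun t ht => hZ'Z (hTY n ht).1) _ (half_pos (hr n)) (hTsep n))
      hκ (fun t ht => (hTY n ht).2) hg hcof hν hν₀ hn
  push Not at hbig
  by_cases hdense : ∃ n, ∃ t ∈ T n, ν ≤ densityChar (Z' ∩ ball t (r n))
  · obtain ⟨n, t, ht, hνt⟩ := hdense
    exact hasAbsorbedDiscreteSubset_of_ball (hTY n ht).2 IH hνκ hνt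
  push Not at hdense
  exfalso
  choose D hD hDc using fun n (t : T n) => exists_isDenseSubset_mk_eq (Z' ∩ ball t (r n))
  have hcover : IsDenseSubset (⋃ n, ⋃ t : T n, D n t) Z' := by
    refine ⟨iUnion_subset fun n => iUnion_subset fun t => (hD n t).1.trans inter_subset_left,
      fun y hy => ?_⟩
    obtain ⟨n, hn⟩ := hlight y (hZ'Z hy)
    obtain ⟨t, ht, hyt⟩ := hTcov n y ⟨hy, hn⟩
    have hyD := (hD n ⟨t, ht⟩).2 ⟨hy, mem_ball.2 (hyt.trans (half_lt_self (hr n)))⟩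
    exact closure_mono ((subset_iUnion (fun t : T n => D n t) ⟨t, ht⟩).trans
      (subset_iUnion (fun n => ⋃ t : T n, D n t) n)) hyD
  have hsmall : #(⋃ n, ⋃ t : T n, D n t) < ν := mk_iUnion_nat_lt_of_isRegular hν hν₀ fun n =>
    (card_iUnion_lt_iff_forall_of_isRegular hν (hbig n)).2 fun t =>
      (hDc n t).trans_lt (hdense n t t.2)
  exact (hZ'.trans (densityChar_le hcover)).not_gt (hsmall.trans hνκ)

/-- The stages are found one after the other in `Z` minus the closure of a set of size `< κ`
that absorbs the isolating balls of all earlier stages. -/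
theorem hasDiscreteSubsetOfCard_of_light (hκ : ℵ₀ < κ)
    (hsep : ∀ S ⊆ Z, ∀ ε > 0, S.Pairwise (fun a b => ε ≤ dist a b) → #S < κ)
    (IH : ∀ ν < κ, ∀ V : Set M, ν ≤ densityChar V → HasDiscreteSubsetOfCard V ν)
    (hlight : ∀ x ∈ Z, ∃ n : ℕ, densityChar (Z ∩ ball x (1 / (n + 1))) < κ)
    {g : ℕ → Cardinal.{u}} (hg : ∀ k, ℵ₀ < g k ∧ g k < κ ∧ (g k).IsRegular)
    (hcof : ∀ c, (∀ k, g k ≤ c) → κ ≤ c) (hZ : κ ≤ densityChar Z) :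
    HasDiscreteSubsetOfCard Z κ := by
  have hcof' : ∀ c < κ, ∃ k, c ≤ g k := fun c hc => by
    by_contra! h
    exact hc.not_ge (hcof c fun k => (h k).le)
  have hstep : ∀ (k : ℕ) (W : {W : Set M // W ⊆ Z ∧ #W < κ}), ∃ R ⊆ Z \ closure W.1, ∃ b,
      IsIsolatingRadius R b ∧ g k ≤ #R ∧ (∀ s ∈ R, ∀ w ∈ closure W.1, b s ≤ dist s w) ∧
      ∃ W' ⊆ Z, #W' < κ ∧ ∀ s ∈ R, Z ∩ closedBall s (b s) ⊆ closure W' := by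
    rintro k ⟨W, hWZ, hWκ⟩
    have hdiff : κ ≤ densityChar (Z \ closure W) := by
      by_contra! h
      exact (hZ.trans (densityChar_le_diff_closure_add hWZ)).not_gt (add_lt_of_lt hκ.le h hWκ)
    exact (hasAbsorbedDiscreteSubset_of_light hκ hsep IH hlight (fun k => (hg k).2.1) hcof'
      sdiff_subset hdiff (hg k).2.2 (hg k).1 (hg k).2.1).exists_le_dist isClosed_closure
  choose R hRsub b hb hgR hbW W' hW'Z hW'κ hW' using hstep
  let W : ℕ → {W : Set M // W ⊆ Z ∧ #W < κ} := fun k => Nat.rec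
    ⟨∅, empty_subset Z, by simpa using aleph0_pos.trans hκ⟩
    (fun k V => ⟨V.1 ∪ W' k V, union_subset V.2.1 (hW'Z k V),
      (mk_union_le _ _).trans_lt (add_lt_of_lt hκ.le V.2.2 (hW'κ k V))⟩) k
  have hW_mono : Monotone fun k => (W k).1 := monotone_nat_of_le_succ fun k => subset_union_left
  refine ⟨⋃ k, R k (W k), iUnion_subset fun k => (hRsub k _).trans sdiff_subset,
    isDiscrete_iUnion_of_isIsolatingRadius (fun k => hb k (W k)) ?_,
    hcof _ fun k => (hgR k _).trans (mk_le_mk_of_subset (subset_iUnion (fun k => R k (W k)) k))⟩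
  intro i j hij s hs t ht
  have hsub : closure (W' i (W i)) ⊆ closure (W j).1 :=
    closure_mono (subset_union_right.trans (hW_mono (Nat.succ_le_of_lt hij)))
  have htZ := hRsub j _ ht
  have hs' : s ∈ closure (W j).1 :=
    hsub (hW' i _ s hs ⟨(hRsub i _ hs).1, mem_closedBall_self (hb i _ s hs).1.le⟩)
  refine ⟨not_lt.1 fun hlt => htZ.2 (hsub (hW' i _ s hs ⟨htZ.1, ?_⟩)), ?_⟩
  · rw [mem_closedBall, dist_comm]
    exact hlt.le
  · rw [dist_comm]
    exact hbW j _ t ht s hs'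

theorem hasDiscreteSubsetOfCard_of_le_densityChar (κ : Cardinal.{u}) (Z : Set M)
    (hZ : κ ≤ densityChar Z) : HasDiscreteSubsetOfCard Z κ := by
  induction κ using Cardinal.lt_wf.induction generalizing Z with | _ κ IH => ?_
  rcases le_or_gt κ ℵ₀ with hκ | hκ
  · exact hasDiscreteSubsetOfCard_of_le_aleph0 hκ hZ
  by_cases hsep : ∃ S ⊆ Z, ∃ ε > 0, S.Pairwise (fun a b => ε ≤ dist a b) ∧ κ ≤ #S
  · obtain ⟨S, hSZ, ε, hε, hS, hκS⟩ := hsep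
    exact ⟨S, hSZ, (isIsolatingRadius_const hε hS).isDiscrete, hκS⟩
  push Not at hsep
  choose A hAZ hAsep hAcov using fun n : ℕ =>
    exists_maximal_separated Z (Nat.one_div_pos_of_nat (n := n))
  have hAdense : IsDenseSubset (⋃ n, A n) Z := by
    refine ⟨iUnion_subset hAZ, fun z hz => Metric.mem_closure_iff.2 fun ε hε => ?_⟩
    obtain ⟨n, hn⟩ := exists_nat_one_div_lt hε
    obtain ⟨a, ha, hza⟩ := hAcov n z hz
    exact ⟨a, mem_iUnion.2 ⟨n, ha⟩, hza.trans hn⟩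
  obtain ⟨g, hg, hcof⟩ := exists_isRegular_cofinal_seq hκ
    (fun n => hsep _ (hAZ n) _ Nat.one_div_pos_of_nat (hAsep n)) fun c hc =>
      not_lt.1 fun hcκ => (hZ.trans ((densityChar_le hAdense).trans (mk_iUnion_nat_le hc))).not_gt
        (mul_lt_of_lt hκ.le hκ hcκ)
  by_cases hheavy : ∃ x ∈ Z, ∀ ρ > 0, κ ≤ densityChar (Z ∩ ball x ρ)
  · obtain ⟨x, hx, hx'⟩ := hheavy
    exact hasDiscreteSubsetOfCard_of_heavy IH (fun k => ⟨(hg k).1.le, (hg k).2.1⟩) hcof hx hx'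
  push Not at hheavy
  refine hasDiscreteSubsetOfCard_of_light hκ hsep IH (fun x hx => ?_) hg hcof hZ
  obtain ⟨ρ, hρ, hlt⟩ := hheavy x hx
  obtain ⟨n, hn⟩ := exists_nat_one_div_lt hρ
  exact ⟨n, (densityChar_le_of_subset (inter_subset_inter_right Z (ball_subset_ball hn.le))
    ).trans_lt (max_lt hκ hlt)⟩

end Construction

section LipschitzNorm

theorem lipNorm_nonneg (f : M → ℝ) : 0 ≤ lipNorm f :=
  Real.sSup_nonneg (by rintro _ ⟨p, q, _, rfl⟩; positivity)

theorem lipNorm_le {f : M → ℝ} {C : ℝ} (hC : 0 ≤ C) (h : ∀ p q, |f p - f q| ≤ C * dist p q) :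
    lipNorm f ≤ C :=
  Real.sSup_le (by rintro _ ⟨p, q, _, rfl⟩; exact div_le_of_le_mul₀ dist_nonneg hC (h p q)) hC

theorem lipNorm_eq_and_pointwiseAttains {f : M → ℝ} {C : ℝ} {p : M} (hC : 0 ≤ C)
    (h : ∀ p q, |f p - f q| ≤ C * dist p q)
    (happrox : ∀ w < C, ∃ q ≠ p, w < |f p - f q| / dist p q) :
    lipNorm f = C ∧ PointwiseAttains f := by
  set Sp := {r : ℝ | ∃ q : M, q ≠ p ∧ r = |f p - f q| / dist p q}
  have hle : ∀ p q, |f p - f q| / dist p q ≤ C := fun p q =>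
    div_le_of_le_mul₀ dist_nonneg hC (h p q)
  have hSp_ne : Sp.Nonempty := by
    obtain ⟨q, hq, -⟩ := happrox (C - 1) (by linarith)
    exact ⟨_, q, hq, rfl⟩
  have hSp : sSup Sp = C := csSup_eq_of_forall_le_of_forall_lt_exists_gt hSp_ne
    (by rintro _ ⟨q, -, rfl⟩; exact hle p q)
    fun w hw => let ⟨q, hq, hwq⟩ := happrox w hw; ⟨_, ⟨q, hq, rfl⟩, hwq⟩
  have hlip : lipNorm f = C := le_antisymm (lipNorm_le hC h) <| hSp ▸ csSup_le_csSup
    ⟨C, by rintro _ ⟨p, q, -, rfl⟩; exact hle p q⟩ hSp_ne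
    (by rintro _ ⟨q, hq, rfl⟩; exact ⟨p, q, hq.symm, rfl⟩)
  exact ⟨hlip, p, hSp.trans hlip.symm⟩

theorem not_stronglyAttains_of_lt {f : M → ℝ} {C : ℝ} (hf : lipNorm f = C)
    (h : ∀ p q, p ≠ q → |f p - f q| < C * dist p q) : ¬ StronglyAttains f := by
  rintro ⟨p, q, hpq, heq⟩
  exact (h p q hpq).ne (heq.trans (by rw [hf]))

end LipschitzNorm

section BumpSum

variable {Γ : Type*} {c : Γ → M} {ρ : Γ → ℝ}

noncomputable def bumpSum (c : Γ → M) (ρ : Γ → ℝ) (A : Γ → ℝ) (x : M) : ℝ :=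
  ∑ᶠ γ, A γ * hump (ρ γ) (dist x (c γ))

theorem bumpSum_eq_of_forall_ne {x : M} {γ : Γ} (h : ∀ δ ≠ γ, ρ δ ≤ dist x (c δ)) (A : Γ → ℝ) :
    bumpSum c ρ A x = A γ * hump (ρ γ) (dist x (c γ)) :=
  finsum_eq_single _ γ fun δ hδ => by rw [hump_eq_zero (h δ hδ), mul_zero]

theorem bumpSum_eq_zero {x : M} (h : ∀ γ, ρ γ ≤ dist x (c γ)) (A : Γ → ℝ) :
    bumpSum c ρ A x = 0 :=
  finsum_eq_zero_of_forall_eq_zero fun γ => by rw [hump_eq_zero (h γ), mul_zero]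

theorem bumpSum_smul (t : ℝ) (A : Γ → ℝ) (x : M) :
    bumpSum c ρ (t • A) x = t * bumpSum c ρ A x := by
  simp only [bumpSum, mul_finsum, Pi.smul_apply, smul_eq_mul, mul_assoc]

theorem abs_bumpSum_sub_lt_of_forall_ne (hρ : ∀ γ, 0 < ρ γ) {A : Γ → ℝ} {C : ℝ} (hC : 0 < C)
    (hA : ∀ γ, |A γ| ≤ C) {x y : M} (hxy : x ≠ y) {γ : Γ} (hx : ∀ δ ≠ γ, ρ δ ≤ dist x (c δ))
    (hy : ∀ δ ≠ γ, ρ δ ≤ dist y (c δ)) :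
    |bumpSum c ρ A x - bumpSum c ρ A y| < C * dist x y := by
  rw [bumpSum_eq_of_forall_ne hx, bumpSum_eq_of_forall_ne hy, ← mul_sub, abs_mul]
  by_cases h : hump (ρ γ) (dist x (c γ)) = hump (ρ γ) (dist y (c γ))
  · rw [h, sub_self, abs_zero, mul_zero]
    exact mul_pos hC (dist_pos.2 hxy)
  calc |A γ| * |hump (ρ γ) (dist x (c γ)) - hump (ρ γ) (dist y (c γ))|
      ≤ C * |hump (ρ γ) (dist x (c γ)) - hump (ρ γ) (dist y (c γ))| :=
        mul_le_mul_of_nonneg_right (hA γ) (abs_nonneg _)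
    _ < C * |dist x (c γ) - dist y (c γ)| :=
        mul_lt_mul_of_pos_left (abs_hump_sub_lt (hρ γ) dist_nonneg dist_nonneg h) hC
    _ ≤ C * dist x y := mul_le_mul_of_nonneg_left (abs_dist_sub_le x y (c γ)) hC.le

variable (hsep : Pairwise fun γ δ => ρ γ + ρ δ ≤ dist (c γ) (c δ))
include hsep

theorem forall_ne_of_dist_lt {x : M} {γ : Γ} (hx : dist x (c γ) < ρ γ) :
    ∀ δ ≠ γ, ρ δ ≤ dist x (c δ) := fun δ hδ => by
  have := hsep hδ.symm
  linarith [dist_triangle_left (c γ) (c δ) x]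

theorem hasFiniteSupport_bump (A : Γ → ℝ) (x : M) :
    Function.HasFiniteSupport fun γ => A γ * hump (ρ γ) (dist x (c γ)) := by
  refine Subsingleton.finite fun γ hγ δ hδ => by_contra fun hγδ => hγ ?_
  have hδx : dist x (c δ) < ρ δ :=
    not_le.1 fun h => hδ (show A δ * _ = 0 by rw [hump_eq_zero h, mul_zero])
  show A γ * _ = 0
  rw [hump_eq_zero (forall_ne_of_dist_lt hsep hδx γ hγδ), mul_zero]

theorem bumpSum_add (A B : Γ → ℝ) (x : M) :
    bumpSum c ρ (A + B) x = bumpSum c ρ A x + bumpSum c ρ B x := by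
  rw [bumpSum, bumpSum, bumpSum, ← finsum_add_distrib (hasFiniteSupport_bump hsep A x)
    (hasFiniteSupport_bump hsep B x)]
  simp only [Pi.add_apply, add_mul]

variable (hρ : ∀ γ, 0 < ρ γ)
include hρ

/-- Each bump is at most half the distance to the boundary of its ball, and the balls are
disjoint. -/
theorem abs_bumpSum_sub_lt_of_ne {A : Γ → ℝ} {C : ℝ} (hC : 0 < C) (hA : ∀ γ, |A γ| ≤ C)
    {x y : M} {γ δ : Γ} (hγδ : γ ≠ δ) (hx : dist x (c γ) < ρ γ) (hy : dist y (c δ) < ρ δ) :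
    |bumpSum c ρ A x - bumpSum c ρ A y| < C * dist x y := by
  rw [bumpSum_eq_of_forall_ne (forall_ne_of_dist_lt hsep hx),
    bumpSum_eq_of_forall_ne (forall_ne_of_dist_lt hsep hy)]
  have hφx := hump_le_half (hρ γ) dist_nonneg hx.le
  have hφy := hump_le_half (hρ δ) dist_nonneg hy.le
  have hsep' := hsep hγδ
  have htri : dist (c γ) (c δ) ≤ dist x (c γ) + dist x y + dist y (c δ) := by
    linarith [dist_triangle (c γ) x (c δ), dist_triangle x y (c δ), dist_comm x (c γ)]
  calc |A γ * hump (ρ γ) (dist x (c γ)) - A δ * hump (ρ δ) (dist y (c δ))|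
      ≤ |A γ * hump (ρ γ) (dist x (c γ))| + |A δ * hump (ρ δ) (dist y (c δ))| := abs_sub _ _
    _ = |A γ| * hump (ρ γ) (dist x (c γ)) + |A δ| * hump (ρ δ) (dist y (c δ)) := by
        rw [abs_mul, abs_mul, abs_of_nonneg (hump_nonneg (hρ γ) _),
          abs_of_nonneg (hump_nonneg (hρ δ) _)]
    _ ≤ C * (hump (ρ γ) (dist x (c γ)) + hump (ρ δ) (dist y (c δ))) := by
        rw [mul_add]
        exact add_le_add (mul_le_mul_of_nonneg_right (hA γ) (hump_nonneg (hρ γ) _))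
          (mul_le_mul_of_nonneg_right (hA δ) (hump_nonneg (hρ δ) _))
    _ < C * dist x y := mul_lt_mul_of_pos_left (by linarith) hC

theorem abs_bumpSum_sub_lt {A : Γ → ℝ} {C : ℝ} (hC : 0 < C) (hA : ∀ γ, |A γ| ≤ C) {x y : M}
    (hxy : x ≠ y) : |bumpSum c ρ A x - bumpSum c ρ A y| < C * dist x y := by
  by_cases hx : ∃ γ, dist x (c γ) < ρ γ
  · obtain ⟨γ, hγ⟩ := hx
    by_cases hy : ∃ δ ≠ γ, dist y (c δ) < ρ δ
    · obtain ⟨δ, hδγ, hδ⟩ := hy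
      exact abs_bumpSum_sub_lt_of_ne hsep hρ hC hA hδγ.symm hγ hδ
    · push Not at hy
      exact abs_bumpSum_sub_lt_of_forall_ne hρ hC hA hxy (forall_ne_of_dist_lt hsep hγ) hy
  · push Not at hx
    by_cases hy : ∃ δ, dist y (c δ) < ρ δ
    · obtain ⟨δ, hδ⟩ := hy
      exact abs_bumpSum_sub_lt_of_forall_ne hρ hC hA hxy (fun ε _ => hx ε)
        (forall_ne_of_dist_lt hsep hδ)
    · push Not at hy
      rw [bumpSum_eq_zero hx, bumpSum_eq_zero hy, sub_self, abs_zero]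
      exact mul_pos hC (dist_pos.2 hxy)

theorem abs_bumpSum_sub_le {A : Γ → ℝ} {C : ℝ} (hC : 0 ≤ C) (hA : ∀ γ, |A γ| ≤ C) (x y : M) :
    |bumpSum c ρ A x - bumpSum c ρ A y| ≤ C * dist x y := by
  rcases eq_or_ne x y with rfl | hxy
  · simp
  rcases hC.eq_or_lt with rfl | hC
  · have hA0 : ∀ γ, A γ = 0 := fun γ => abs_nonpos_iff.1 (hA γ)
    simp [bumpSum, hA0]
  · exact (abs_bumpSum_sub_lt hsep hρ hC hA hxy).le

theorem bumpSum_center_sub {A : Γ → ℝ} {γ : Γ} {y : M} (hy : dist y (c γ) < ρ γ) :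
    bumpSum c ρ A (c γ) - bumpSum c ρ A y =
      A γ * (dist y (c γ) * (2 * ρ γ - dist y (c γ)) / (2 * ρ γ)) := by
  have hcγ : dist (c γ) (c γ) < ρ γ := by simpa using hρ γ
  rw [bumpSum_eq_of_forall_ne (forall_ne_of_dist_lt hsep hcγ),
    bumpSum_eq_of_forall_ne (forall_ne_of_dist_lt hsep hy), dist_self, ← mul_sub,
    hump_zero_sub (hρ γ) hy.le]

/-- Near the centre `c γ` the slope of the `γ`-th bump is `1 - d / (2 ρ γ)`. -/
theorem exists_slope_gt {A : Γ → ℝ} {γ : Γ} (hacc : AccPt (c γ) (𝓟 univ)) {w : ℝ}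
    (hw : w < |A γ|) :
    ∃ y ≠ c γ, w < |bumpSum c ρ A (c γ) - bumpSum c ρ A y| / dist (c γ) y := by
  set C := |A γ|
  set r := ρ γ
  have hr : 0 < r := hρ γ
  have hε : 0 < min r (2 * r * (C - w) / (C + 1)) :=
    lt_min hr (div_pos (by nlinarith) (by positivity))
  obtain ⟨y, ⟨hyε, -⟩, hyc⟩ := accPt_iff_nhds.1 hacc _ (ball_mem_nhds _ hε)
  set d := dist y (c γ)
  have hd : 0 < d := dist_pos.2 hyc
  have hdr : d < r := hyε.trans_le (min_le_left _ _)
  have hdw : d * (C + 1) < 2 * r * (C - w) :=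
    (lt_div_iff₀ (by positivity)).1 (hyε.trans_le (min_le_right _ _))
  have habs : |bumpSum c ρ A (c γ) - bumpSum c ρ A y| = C * (d * (2 * r - d) / (2 * r)) := by
    rw [bumpSum_center_sub hsep hρ hdr, abs_mul,
      abs_of_nonneg (div_nonneg (mul_nonneg hd.le (by linarith)) (by linarith))]
  have hslope : C * (d * (2 * r - d) / (2 * r)) / d = C * (2 * r - d) / (2 * r) := by
    field_simp
  refine ⟨y, hyc, ?_⟩
  rw [habs, dist_comm, hslope, lt_div_iff₀ (by linarith)]
  linarith

end BumpSum

theorem exists_linearMap_pointwiseAttains_not_stronglyAttains (base : M) {Γ : Type*}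
    [TopologicalSpace Γ] {c : Γ → M} {ρ : Γ → ℝ} (hρ : ∀ γ, 0 < ρ γ)
    (hsep : Pairwise fun γ δ => ρ γ + ρ δ ≤ dist (c γ) (c δ))
    (hacc : ∀ γ, AccPt (c γ) (𝓟 univ)) :
    ∃ T : C₀(Γ, ℝ) →ₗ[ℝ] (M → ℝ), ∀ a : C₀(Γ, ℝ),
      MemLip0 base (T a) ∧ lipNorm (T a) = ‖a‖ ∧
        (a ≠ 0 → PointwiseAttains (T a) ∧ ¬ StronglyAttains (T a)) := by
  refine ⟨{ toFun := fun a x => bumpSum c ρ a x - bumpSum c ρ a base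
            map_add' := fun a b => funext fun x => by
              simp only [ZeroAtInftyContinuousMap.coe_add, bumpSum_add hsep, Pi.add_apply]
              ring
            map_smul' := fun t a => funext fun x => by
              simp only [ZeroAtInftyContinuousMap.coe_smul, bumpSum_smul, RingHom.id_apply,
                Pi.smul_apply, smul_eq_mul]
              ring }, fun a => ?_⟩
  set f : M → ℝ := fun x => bumpSum c ρ a x - bumpSum c ρ a base
  change MemLip0 base f ∧ lipNorm f = ‖a‖ ∧ (a ≠ 0 → PointwiseAttains f ∧ ¬ StronglyAttains f)
  have hdiff : ∀ p q, f p - f q = bumpSum c ρ a p - bumpSum c ρ a q :=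
    fun p q => sub_sub_sub_cancel_right _ _ _
  have hA := a.abs_apply_le_norm
  have hle : ∀ p q, |f p - f q| ≤ ‖a‖ * dist p q := fun p q => by
    rw [hdiff]
    exact abs_bumpSum_sub_le hsep hρ (norm_nonneg a) hA p q
  have hmem : MemLip0 base f :=
    ⟨sub_self _, ‖a‖₊, LipschitzWith.of_dist_le_mul fun p q => by rw [Real.dist_eq]; exact hle p q⟩
  rcases eq_or_ne a 0 with rfl | ha
  · refine ⟨hmem, le_antisymm (lipNorm_le (norm_nonneg _) hle) ?_, fun h => absurd rfl h⟩
    rw [norm_zero]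
    exact lipNorm_nonneg f
  obtain ⟨γ, hγ⟩ := ZeroAtInftyContinuousMap.exists_abs_apply_eq_norm ha
  obtain ⟨hnorm, hpna⟩ := lipNorm_eq_and_pointwiseAttains (p := c γ) (norm_nonneg a) hle
    fun w hw => by
      simp only [hdiff]
      exact exists_slope_gt hsep hρ (hacc γ) (hγ ▸ hw)
  refine ⟨hmem, hnorm, fun _ => ⟨hpna, not_stronglyAttains_of_lt hnorm fun p q hpq => ?_⟩⟩
  rw [hdiff]
  exact abs_bumpSum_sub_lt hsep hρ (norm_pos_iff.2 ha) hA hpq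

end

theorem c0Gamma_in_PNA_not_SNA_general {M : Type u} [MetricSpace M] (base : M)
    (Γ : Type u) [TopologicalSpace Γ]
    (M' : Set M) (hM' : M' = {x : M | AccPt x (Filter.principal (Set.univ : Set M))})
    (hlow : ∀ D : Set M, D ⊆ M' → M' ⊆ closure D → Cardinal.mk Γ ≤ Cardinal.mk ↥D) :
    ∃ T : C₀(Γ, ℝ) →ₗ[ℝ] (M → ℝ),
      ∀ a : C₀(Γ, ℝ),
        MemLip0 base (T a) ∧ lipNorm (T a) = ‖a‖ ∧
        (a ≠ 0 → PointwiseAttains (T a) ∧ ¬ StronglyAttains (T a)) := by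
  obtain ⟨S, hSM', hS, hΓS⟩ := hasDiscreteSubsetOfCard_of_le_densityChar (Cardinal.mk Γ) M'
    (le_densityChar fun D hD => hlow D hD.1 hD.2)
  obtain ⟨e⟩ := (Cardinal.le_def Γ S).1 hΓS
  obtain ⟨b, hb⟩ := hS.exists_isIsolatingRadius
  refine exists_linearMap_pointwiseAttains_not_stronglyAttains base (c := fun γ => e γ)
    (ρ := fun γ => b (e γ) / 2) (fun γ => half_pos (hb _ (e γ).2).1) (fun γ δ hγδ => ?_)
    fun γ => by simpa [hM'] using hSM' (e γ).2
  have hne : (e δ : M) ≠ e γ := fun h => hγδ (e.injective (Subtype.ext h)).symm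
  have h₁ := (hb _ (e γ).2).2 _ (e δ).2 hne
  have h₂ := (hb _ (e δ).2).2 _ (e γ).2 hne.symm
  rw [dist_comm] at h₂
  change b (e γ) / 2 + b (e δ) / 2 ≤ dist (e γ : M) (e δ)
  linarith

/-- If the set of accumulation points of an infinite metric space `M` has infinite density
character `Γ`, then `(PNA(M) \ SNA(M)) ∪ {0}` contains an isometric copy of `c₀(Γ)`. -/
theorem c0Gamma_in_PNA_not_SNA {M : Type u} [MetricSpace M] [Infinite M] (base : M)
    (Γ : Type u) [Infinite Γ] [TopologicalSpace Γ] [DiscreteTopology Γ]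
    (M' : Set M) (hM' : M' = {x : M | AccPt x (Filter.principal (Set.univ : Set M))})
    (hlow : ∀ D : Set M, D ⊆ M' → M' ⊆ closure D → Cardinal.mk Γ ≤ Cardinal.mk ↥D)
    (hex : ∃ D : Set M, D ⊆ M' ∧ M' ⊆ closure D ∧ Cardinal.mk ↥D = Cardinal.mk Γ) :
    ∃ T : C₀(Γ, ℝ) →ₗ[ℝ] (M → ℝ),
      ∀ a : C₀(Γ, ℝ),
        MemLip0 base (T a) ∧ lipNorm (T a) = ‖a‖ ∧
        (a ≠ 0 → PointwiseAttains (T a) ∧ ¬ StronglyAttains (T a)) :=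
  c0Gamma_in_PNA_not_SNA_general base Γ M' hM' hlow
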